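/- arXiv:2201.00263 — 3 statements merged into one kernel-verified Lean document; each statement's English description precedes it below -/
import Mathlib

section
/- Let m ≥ 3 be an integer and set c_m = 4(m-1)/(m-2). Define y(t) = t(t^{4/(m-2)} - 1)/(c_m (t-1)). Then for every t ∈ (0,1), y(t) < 1/(m-1). -/
/-! Since `c_m = (m - 1) · a` with `a = 4/(m-2) > 0` and `t - 1 < 0`, the claim is
`a (t - 1) < t (t^a - 1)`, i.e. `1 + (1 + a)(t - 1) < t^(1 + a)`: the strict Bernoulli
inequality for the exponent `1 + a > 1`. -/

theorem mul_sub_one_lt_mul_rpow_sub_one {a t : ℝ} (ha : 0 < a) (ht0 : 0 < t) (ht1 : t ≠ 1) :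
    a * (t - 1) < t * (t ^ a - 1) := by
  have bernoulli : 1 + (1 + a) * (t - 1) < (1 + (t - 1)) ^ (1 + a) :=
    one_add_mul_self_lt_rpow_one_add (by linarith) (sub_ne_zero.mpr ht1) (by linarith)
  rw [add_sub_cancel, Real.rpow_add ht0, Real.rpow_one] at bernoulli
  linarith

theorem mul_rpow_sub_one_div_lt {a k t : ℝ} (ha : 0 < a) (hk : 0 < k) (ht : t ∈ Set.Ioo 0 1) :
    t * (t ^ a - 1) / (a * k * (t - 1)) < 1 / k := by
  obtain ⟨ht0, ht1⟩ := ht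
  rw [div_lt_iff_of_neg (mul_neg_of_pos_of_neg (by positivity) (by linarith)),
    one_div_mul_eq_div, mul_right_comm, mul_div_assoc, div_self hk.ne', mul_one]
  exact mul_sub_one_lt_mul_rpow_sub_one ha ht0 ht1.ne

/-- For an integer `m ≥ 3` and `c_m = 4(m-1)/(m-2)`, the function
`y(t) = t (t^{4/(m-2)} - 1) / (c_m (t-1))` satisfies `y(t) < 1/(m-1)` for all
`t ∈ (0,1)`. -/
theorem stmt_1 (m : ℕ) (hm : 3 ≤ m) :
    ∀ t ∈ Set.Ioo (0 : ℝ) 1,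
      t * (t ^ ((4 : ℝ) / ((m : ℝ) - 2)) - 1) /
        ((4 * ((m : ℝ) - 1) / ((m : ℝ) - 2)) * (t - 1)) < 1 / ((m : ℝ) - 1) := by
  intro t ht
  have hm3 : (3 : ℝ) ≤ m := by exact_mod_cast hm
  rw [mul_div_right_comm (4 : ℝ)]
  exact mul_rpow_sub_one_div_lt (by apply div_pos <;> linarith) (by linarith) ht
end

section
/- Let u > 0 satisfy the Yamabe-type equation c_m Δu - S u + S̃ u^{(m+2)/(m-2)} = 0 on Ω with c_m = 4(m-1)/(m-2), where S ≥ 0 is constant and S̃ ≥ S on Ω. Then v = 1 - u satisfies Δv + Λ(x) v ≥ 0 on Ω, where Λ(x) = S u(x)(1 - u(x)^{4/(m-2)})/(c_m(1-u(x))) when u(x) ≠ 1 and Λ(x) = S/(m-1) when u(x) = 1; moreover Λ(x) ≤ S/(m-1) at every point where v(x) > 0. -/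
/-- Step 1 of Theorem 1.5: let `u > 0` solve the Yamabe-type
equation `c_m Δu - S u + S̃ u^{(m+2)/(m-2)} = 0` on `Ω`, `c_m = 4(m-1)/(m-2)`,
with `S ≥ 0` constant and `S̃ ≥ S` on `Ω`. Then `v = 1 - u` satisfies
`Δv + Λ v ≥ 0` on `Ω`, where `Λ(x) = S u(x)(1 - u(x)^{4/(m-2)})/(c_m(1-u(x)))`
if `u(x) ≠ 1` and `Λ(x) = S/(m-1)` if `u(x) = 1`; moreover `Λ(x) ≤ S/(m-1)`
wherever `v(x) > 0`. (`lapu`, `lapv` are the Laplacians of `u` and `v = 1-u`;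
by linearity `lapv = -lapu`.) -/
theorem stmt_15 {M : Type*} (m : ℕ) (hm : 3 ≤ m) (S : ℝ) (hS : 0 ≤ S)
    (Ω : Set M) (u Stilde lapu lapv : M → ℝ)
    (hu_pos : ∀ x ∈ Ω, 0 < u x)
    (hStilde : ∀ x ∈ Ω, S ≤ Stilde x)
    (cm : ℝ) (hcm : cm = 4 * ((m : ℝ) - 1) / ((m : ℝ) - 2))
    (hYamabe : ∀ x ∈ Ω,
      cm * lapu x - S * u x + Stilde x * (u x) ^ (((m : ℝ) + 2) / ((m : ℝ) - 2)) = 0)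
    (hlapv : ∀ x ∈ Ω, lapv x = - lapu x)
    (Λ : M → ℝ)
    (hΛ : ∀ x, Λ x = if u x = 1 then S / ((m : ℝ) - 1)
      else S * u x * (1 - (u x) ^ ((4 : ℝ) / ((m : ℝ) - 2))) / (cm * (1 - u x))) :
    (∀ x ∈ Ω, 0 ≤ lapv x + Λ x * (1 - u x)) ∧
    (∀ x ∈ Ω, 0 < 1 - u x → Λ x ≤ S / ((m : ℝ) - 1)) := by
  have hm3 : (3 : ℝ) ≤ (m : ℝ) := by exact_mod_cast hm
  have h2 : (0 : ℝ) < (m : ℝ) - 2 := by linarith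
  have h1 : (0 : ℝ) < (m : ℝ) - 1 := by linarith
  have hcm_pos : 0 < cm := by rw [hcm]; positivity
  set a : ℝ := 4 / ((m : ℝ) - 2) with ha
  have ha_pos : 0 < a := by positivity
  have hp : ((m : ℝ) + 2) / ((m : ℝ) - 2) = 1 + a := by
    rw [ha]; field_simp; ring
  -- u^((m+2)/(m-2)) = u * u^a
  have hup : ∀ x ∈ Ω, (u x) ^ (((m : ℝ) + 2) / ((m : ℝ) - 2)) = u x * (u x) ^ a := by
    intro x hx
    rw [hp, Real.rpow_add (hu_pos x hx), Real.rpow_one]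
  have hlapu' : ∀ x ∈ Ω,
      lapu x = (S * u x - Stilde x * (u x * (u x) ^ a)) / cm := by
    intro x hx
    have h := hYamabe x hx
    rw [hup x hx] at h
    field_simp
    linarith
  constructor
  · intro x hx
    rw [hlapv x hx, hlapu' x hx, hΛ x]
    by_cases h1' : u x = 1
    · rw [if_pos h1', h1']
      simp only [Real.one_rpow, mul_one, sub_self, mul_zero, add_zero]
      have hst := hStilde x hx
      rw [show -((S - Stilde x) / cm) = (Stilde x - S) / cm by ring]
      exact div_nonneg (by linarith) hcm_pos.le
    · rw [if_neg h1']
      have hne : 1 - u x ≠ 0 := fun h => h1' (by linarith [sub_eq_zero.mp h])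
      have key : -((S * u x - Stilde x * (u x * (u x) ^ a)) / cm) +
          S * u x * (1 - (u x) ^ a) / (cm * (1 - u x)) * (1 - u x) =
          (Stilde x - S) * (u x * (u x) ^ a) / cm := by
        field_simp
        ring
      rw [key]
      have hst := hStilde x hx
      have hu := (hu_pos x hx).le
      have hua : 0 ≤ (u x) ^ a := Real.rpow_nonneg hu a
      exact div_nonneg (mul_nonneg (by linarith) (mul_nonneg hu hua)) hcm_pos.le
  · intro x hx hv
    have hux := hu_pos x hx
    have h1' : u x ≠ 1 := by intro h; rw [h] at hv; linarith
    rw [hΛ x, if_neg h1']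
    -- Bernoulli: u*(1 - u^a) ≤ a*(1 - u)
    have hbern : 1 + (1 + a) * (u x - 1) ≤ (1 + (u x - 1)) ^ (1 + a) :=
      one_add_mul_self_le_rpow_one_add (by linarith) (by linarith)
    rw [add_sub_cancel] at hbern
    have hux1a : (u x) ^ (1 + a) = u x * (u x) ^ a := by
      rw [Real.rpow_add hux, Real.rpow_one]
    rw [hux1a] at hbern
    have hkey : u x * (1 - (u x) ^ a) ≤ a * (1 - u x) := by nlinarith
    have hden : 0 < cm * (1 - u x) := mul_pos hcm_pos hv
    rw [div_le_iff₀ hden]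
    have heq : S / ((m : ℝ) - 1) * (cm * (1 - u x)) = S * (a * (1 - u x)) := by
      rw [hcm, ha]; field_simp
    rw [heq]
    calc S * u x * (1 - (u x) ^ a) = S * (u x * (1 - (u x) ^ a)) := by ring
      _ ≤ S * (a * (1 - u x)) := mul_le_mul_of_nonneg_left hkey hS
end

section
/- Let w > -1 be smooth on (M,g), and suppose (w, φ) solves the φ-CPE system: Hess(w) - w(Ric^φ - (S^φ/(m-1)) g) = T^φ and (1+w)τ(φ) = -dφ(∇w). Set f = -log(1+w). Then (f, φ) satisfies the Einstein-type structure Ric^φ + Hess(f) - df⊗df = λ(x) g and τ(φ) = dφ(∇f), with λ(x) = (S^φ/(m-1))(1 - e^{f}/m). -/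
/-- let `w > -1` solve the φ-CPE system
`Hess(w) - w(Ric^φ - (S^φ/(m-1)) g) = T^φ`, `(1+w) τ(φ) = -dφ(∇w)`, with
`T^φ = Ric^φ - (S^φ/m) g` and `S^φ` constant. Set `f = -log(1+w)`. Then
`(f, φ)` satisfies the Einstein-type structure
`Ric^φ + Hess(f) - df ⊗ df = λ g` with
`λ = (S^φ/(m-1))(1 - e^f/m)`, and `τ(φ) = dφ(∇f)`. (The hypotheses `hdf`,
`hhessf`, `hdφgradf` are the chain rules for `f = -log(1+w)`.) -/
theorem stmt_17 {M E F : Type*} [AddCommGroup F] [Module ℝ F]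
    (m : ℕ) (hm : 2 ≤ m) (Sφ : ℝ)
    (g ricφ Tφ hessw hessf : M → E → E → ℝ)
    (w f : M → ℝ) (dw df : M → E → ℝ)
    (tauφ dφgradw dφgradf : M → F)
    (hw : ∀ x, -1 < w x)
    (hTφ : ∀ x v v', Tφ x v v' = ricφ x v v' - Sφ / (m : ℝ) * g x v v')
    (hCPE1 : ∀ x v v',
      hessw x v v' - w x * (ricφ x v v' - Sφ / ((m : ℝ) - 1) * g x v v') = Tφ x v v')
    (hCPE2 : ∀ x, (1 + w x) • tauφ x = - dφgradw x)
    (hf : ∀ x, f x = - Real.log (1 + w x))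
    (hdf : ∀ x v, df x v = - dw x v / (1 + w x))
    (hhessf : ∀ x v v', hessf x v v' =
      - hessw x v v' / (1 + w x) + dw x v * dw x v' / (1 + w x) ^ 2)
    (hdφgradf : ∀ x, dφgradf x = (-(1 + w x)⁻¹) • dφgradw x) :
    (∀ x v v', ricφ x v v' + hessf x v v' - df x v * df x v' =
      (Sφ / ((m : ℝ) - 1) * (1 - Real.exp (f x) / (m : ℝ))) * g x v v') ∧
    (∀ x, tauφ x = dφgradf x) := by
  have hm1 : (1:ℝ) ≤ (m:ℝ) := by exact_mod_cast Nat.one_le_of_lt hm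
  have hm0 : (m:ℝ) ≠ 0 := by positivity
  have hmm1 : (m:ℝ) - 1 ≠ 0 := by
    have : (2:ℝ) ≤ (m:ℝ) := by exact_mod_cast hm
    linarith
  constructor
  · intro x v v'
    have hpos : 0 < 1 + w x := by linarith [hw x]
    have hne : 1 + w x ≠ 0 := ne_of_gt hpos
    have hef : Real.exp (f x) = (1 + w x)⁻¹ := by
      rw [hf x, Real.exp_neg, Real.exp_log hpos]
    have h1 := hCPE1 x v v'
    rw [hTφ x v v'] at h1
    have h1' : hessw x v v' = ricφ x v v' - Sφ / (m : ℝ) * g x v v'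
        + w x * (ricφ x v v' - Sφ / ((m : ℝ) - 1) * g x v v') := by linarith
    rw [hhessf, hdf, hdf, hef, h1']
    field_simp
    ring
  · intro x
    have hne : 1 + w x ≠ 0 := ne_of_gt (by linarith [hw x] : (0:ℝ) < 1 + w x)
    have h : dφgradw x = -((1 + w x) • tauφ x) := neg_eq_iff_eq_neg.mp (hCPE2 x).symm
    rw [hdφgradf, h, smul_neg, neg_smul, neg_neg, smul_smul, inv_mul_cancel₀ hne, one_smul]
end
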